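/- Fix t ∈ {1,...,T}, a ∈ (0,1/2), x₀ ∈ ℝ^D, and schedules β, β' ∈ [β_min, β_max]^T ⊂ (0,1)^T. Let ᾱ_t = ∏_{s≤t}(1-β_s), ᾱ'_t = ∏_{s≤t}(1-β'_s), and assume ᾱ_t, ᾱ'_t ∈ [a, 1-a]. Then D_KL(N(√ᾱ'_t x₀, (1-ᾱ'_t)I) ‖ N(√ᾱ_t x₀, (1-ᾱ_t)I)) ≤ (t/(1-β_max))² [D(1-a)²/(4a⁴) + ‖x₀‖²/(8a²)] · ‖β' - β‖_∞². -/

import Mathlib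

/-- KL divergence between the isotropic Gaussians `N(μ', v'I)` and `N(μ, vI)` on `ℝ^D`:
`½ [D (v'/v - 1 - log(v'/v)) + ‖μ' - μ‖²/v]`. -/
noncomputable def klIso (D : ℕ) (μ μ' : EuclideanSpace ℝ (Fin D)) (v v' : ℝ) : ℝ :=
  (1 / 2) * ((D : ℝ) * (v' / v - 1 - Real.log (v' / v)) + ‖μ' - μ‖ ^ 2 / v)

/-!
The variance part of the divergence is `D (x - 1 - log x) / 2` at `x = v'/v`, which is
quadratic in `v' - v` once both variances are at least `a`; the mean part is
`(√ᾱ'_t - √ᾱ_t)² ‖x₀‖² / (2 v)`, quadratic in `ᾱ'_t - ᾱ_t` once both are at least `a`.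
So the divergence is `O((ᾱ'_t - ᾱ_t)²)`, and a product of `t` factors in `[0, 1]` moves by at
most `t ‖β' - β‖_∞` when each factor moves by at most `‖β' - β‖_∞`. The stated constant is
larger than the one this gives, by `t ≤ t / (1 - β_max)` and `a ≤ 1 - a`.
-/

open Real Finset

theorem norm_prod_sub_prod_le_sum_norm_sub {ι R : Type*} [NormedCommRing R] [NormOneClass R]
    (s : Finset ι) {f g : ι → R} (hf : ∀ i ∈ s, ‖f i‖ ≤ 1) (hg : ∀ i ∈ s, ‖g i‖ ≤ 1) :
    ‖∏ i ∈ s, f i - ∏ i ∈ s, g i‖ ≤ ∑ i ∈ s, ‖f i - g i‖ := by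
  classical
  induction s using Finset.induction_on with
  | empty => simp
  | insert a s ha ih =>
    rw [forall_mem_insert] at hf hg
    rw [prod_insert ha, prod_insert ha, sum_insert ha]
    have hG : ‖∏ i ∈ s, g i‖ ≤ 1 :=
      (Finset.norm_prod_le _ _).trans (prod_le_one (fun _ _ => norm_nonneg _) hg.2)
    calc ‖f a * ∏ i ∈ s, f i - g a * ∏ i ∈ s, g i‖
        = ‖f a * (∏ i ∈ s, f i - ∏ i ∈ s, g i) + (f a - g a) * ∏ i ∈ s, g i‖ := by ring_nf
      _ ≤ ‖f a‖ * ‖∏ i ∈ s, f i - ∏ i ∈ s, g i‖ + ‖f a - g a‖ * ‖∏ i ∈ s, g i‖ :=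
        norm_add_le_of_le (norm_mul_le _ _) (norm_mul_le _ _)
      _ ≤ 1 * ∑ i ∈ s, ‖f i - g i‖ + ‖f a - g a‖ * 1 := by
        gcongr
        exacts [hf.1, ih hf.2 hg.2]
      _ = ‖f a - g a‖ + ∑ i ∈ s, ‖f i - g i‖ := by ring

theorem abs_prod_one_sub_sub_prod_one_sub_le {ι : Type*} (s : Finset ι) {β β' : ι → ℝ} {δ : ℝ}
    (hβ : ∀ i ∈ s, β i ∈ Set.Icc 0 1) (hβ' : ∀ i ∈ s, β' i ∈ Set.Icc 0 1)
    (hδ : ∀ i ∈ s, |β' i - β i| ≤ δ) :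
    |∏ i ∈ s, (1 - β' i) - ∏ i ∈ s, (1 - β i)| ≤ #s * δ := by
  have one_sub_norm_le {γ : ι → ℝ} (hγ : ∀ i ∈ s, γ i ∈ Set.Icc 0 1) :
      ∀ i ∈ s, ‖1 - γ i‖ ≤ 1 := fun i hi => by
    rw [norm_eq_abs, abs_le]
    constructor <;> linarith [(hγ i hi).1, (hγ i hi).2]
  calc |∏ i ∈ s, (1 - β' i) - ∏ i ∈ s, (1 - β i)|
      ≤ ∑ i ∈ s, ‖(1 - β' i) - (1 - β i)‖ :=
        norm_prod_sub_prod_le_sum_norm_sub s (one_sub_norm_le hβ') (one_sub_norm_le hβ)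
    _ ≤ #s * δ := by
      rw [← nsmul_eq_mul]
      refine sum_le_card_nsmul _ _ _ fun i hi => ?_
      rw [norm_eq_abs, sub_sub_sub_cancel_left, abs_sub_comm]
      exact hδ i hi

namespace Real

theorem sub_one_sub_log_le_sq_div_two {x : ℝ} (hx : 1 ≤ x) :
    x - 1 - log x ≤ (x - 1) ^ 2 / 2 := by
  have hlog := le_log_one_add_of_nonneg (sub_nonneg.2 hx)
  rw [add_sub_cancel] at hlog
  have hpade : (x - 1) - (x - 1) ^ 2 / 2 ≤ 2 * (x - 1) / (x - 1 + 2) := by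
    rw [le_div_iff₀ (by linarith)]
    nlinarith [pow_nonneg (sub_nonneg.2 hx) 3]
  linarith

theorem sub_one_sub_log_le_sq_div_two_mul {x : ℝ} (hx0 : 0 < x) (hx1 : x ≤ 1) :
    x - 1 - log x ≤ (x - 1) ^ 2 / (2 * x) := by
  -- `sinh w ≤ w` for `w = log x ≤ 0` reads `(x - x⁻¹) / 2 ≤ log x`.
  have hsinh : sinh (log x) ≤ log x := sinh_le_self_iff.2 (log_nonpos hx0.le hx1)
  rw [sinh_eq, exp_neg, exp_log hx0] at hsinh
  have hsq : x - 1 - (x - x⁻¹) / 2 = (x - 1) ^ 2 / (2 * x) := by field_simp; ring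
  linarith

theorem div_sub_one_sub_log_div_le {a v v' : ℝ} (ha : 0 < a) (hv : a ≤ v) (hv' : a ≤ v') :
    v' / v - 1 - log (v' / v) ≤ (v' - v) ^ 2 / (2 * a ^ 2) := by
  have hv0 : 0 < v := ha.trans_le hv
  rcases le_total v v' with h | h
  · calc v' / v - 1 - log (v' / v)
        ≤ (v' / v - 1) ^ 2 / 2 := sub_one_sub_log_le_sq_div_two ((one_le_div hv0).2 h)
      _ = (v' - v) ^ 2 / (2 * v ^ 2) := by field_simp
      _ ≤ (v' - v) ^ 2 / (2 * a ^ 2) := by gcongr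
  · calc v' / v - 1 - log (v' / v)
        ≤ (v' / v - 1) ^ 2 / (2 * (v' / v)) :=
          sub_one_sub_log_le_sq_div_two_mul (div_pos (ha.trans_le hv') hv0) ((div_le_one hv0).2 h)
      _ = (v' - v) ^ 2 / (2 * (v * v')) := by field_simp
      _ ≤ (v' - v) ^ 2 / (2 * a ^ 2) := by
          rw [sq a]
          gcongr

theorem sq_sqrt_sub_sqrt_le {a p p' : ℝ} (ha : 0 < a) (hp : a ≤ p) (hp' : a ≤ p') :
    (√p' - √p) ^ 2 ≤ (p' - p) ^ 2 / (4 * a) := by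
  have hsum : 2 * √a ≤ √p' + √p := by linarith [sqrt_le_sqrt hp, sqrt_le_sqrt hp']
  have hdiff : (√p' - √p) * (√p' + √p) = p' - p := by
    rw [mul_comm, ← sq_sub_sq, sq_sqrt (ha.le.trans hp'), sq_sqrt (ha.le.trans hp)]
  rw [le_div_iff₀ (by positivity), ← hdiff, mul_pow]
  gcongr
  calc 4 * a = (2 * √a) ^ 2 := by rw [mul_pow, sq_sqrt ha.le]; norm_num
    _ ≤ (√p' + √p) ^ 2 := by gcongr

end Real

theorem klIso_le {D : ℕ} (μ μ' : EuclideanSpace ℝ (Fin D)) {a v v' : ℝ} (ha : 0 < a)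
    (hv : a ≤ v) (hv' : a ≤ v') :
    klIso D μ μ' v v' ≤ D * (v' - v) ^ 2 / (4 * a ^ 2) + ‖μ' - μ‖ ^ 2 / (2 * a) := by
  have hvar := mul_le_mul_of_nonneg_left (div_sub_one_sub_log_div_le ha hv hv') (Nat.cast_nonneg D)
  have hmean : ‖μ' - μ‖ ^ 2 / v ≤ ‖μ' - μ‖ ^ 2 / a := by gcongr
  unfold klIso
  calc 1 / 2 * (D * (v' / v - 1 - log (v' / v)) + ‖μ' - μ‖ ^ 2 / v)
      ≤ 1 / 2 * (D * ((v' - v) ^ 2 / (2 * a ^ 2)) + ‖μ' - μ‖ ^ 2 / a) := by gcongr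
    _ = D * (v' - v) ^ 2 / (4 * a ^ 2) + ‖μ' - μ‖ ^ 2 / (2 * a) := by ring

theorem klIso_sqrt_smul_le {D : ℕ} (x : EuclideanSpace ℝ (Fin D)) {a p p' : ℝ} (ha : 0 < a)
    (hp : p ∈ Set.Icc a (1 - a)) (hp' : p' ∈ Set.Icc a (1 - a)) :
    klIso D (√p • x) (√p' • x) (1 - p) (1 - p') ≤
      (p' - p) ^ 2 * (D / (4 * a ^ 2) + ‖x‖ ^ 2 / (8 * a ^ 2)) := by
  have hmean : ‖√p' • x - √p • x‖ ^ 2 ≤ (p' - p) ^ 2 / (4 * a) * ‖x‖ ^ 2 := by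
    rw [← sub_smul, norm_smul, mul_pow, norm_eq_abs, sq_abs]
    gcongr
    exact sq_sqrt_sub_sqrt_le ha hp.1 hp'.1
  calc klIso D (√p • x) (√p' • x) (1 - p) (1 - p')
      ≤ D * ((1 - p') - (1 - p)) ^ 2 / (4 * a ^ 2) + ‖√p' • x - √p • x‖ ^ 2 / (2 * a) :=
        klIso_le _ _ ha (by linarith [hp.2]) (by linarith [hp'.2])
    _ ≤ D * ((1 - p') - (1 - p)) ^ 2 / (4 * a ^ 2) +
          (p' - p) ^ 2 / (4 * a) * ‖x‖ ^ 2 / (2 * a) := by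
        gcongr
    _ = (p' - p) ^ 2 * (D / (4 * a ^ 2) + ‖x‖ ^ 2 / (8 * a ^ 2)) := by
        field_simp
        ring

/-- Stable forward drift under schedule updates: for `t ∈ {1,…,T}` and schedules
`β, β' ∈ [β_min, β_max]^T ⊂ (0,1)^T` with `ᾱ_t = ∏_{s≤t}(1-β_s)`,
`ᾱ'_t = ∏_{s≤t}(1-β'_s)` both in `[a, 1-a]`,
`D_KL(N(√ᾱ'_t x₀,(1-ᾱ'_t)I) ‖ N(√ᾱ_t x₀,(1-ᾱ_t)I))
  ≤ (t/(1-β_max))² [D(1-a)²/(4a⁴) + ‖x₀‖²/(8a²)] ‖β'-β‖_∞²`. -/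
theorem stable_forward_drift (D T t : ℕ) (ht : t ∈ Finset.Icc 1 T)
    (a : ℝ) (ha : a ∈ Set.Ioo (0 : ℝ) (1 / 2))
    (x₀ : EuclideanSpace ℝ (Fin D)) (βmin βmax : ℝ)
    (h0 : 0 < βmin) (h1 : βmin ≤ βmax) (h2 : βmax < 1) (β β' : ℕ → ℝ)
    (hβ : ∀ s ∈ Finset.Icc 1 T, β s ∈ Set.Icc βmin βmax)
    (hβ' : ∀ s ∈ Finset.Icc 1 T, β' s ∈ Set.Icc βmin βmax)
    (hne : (Finset.Icc 1 T).Nonempty)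
    (hᾱ : (∏ s ∈ Finset.Icc 1 t, (1 - β s)) ∈ Set.Icc a (1 - a))
    (hᾱ' : (∏ s ∈ Finset.Icc 1 t, (1 - β' s)) ∈ Set.Icc a (1 - a)) :
    klIso D (Real.sqrt (∏ s ∈ Finset.Icc 1 t, (1 - β s)) • x₀)
        (Real.sqrt (∏ s ∈ Finset.Icc 1 t, (1 - β' s)) • x₀)
        (1 - ∏ s ∈ Finset.Icc 1 t, (1 - β s))
        (1 - ∏ s ∈ Finset.Icc 1 t, (1 - β' s)) ≤
      ((t : ℝ) / (1 - βmax)) ^ 2 *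
        ((D : ℝ) * (1 - a) ^ 2 / (4 * a ^ 4) + ‖x₀‖ ^ 2 / (8 * a ^ 2)) *
        ((Finset.Icc 1 T).sup' hne (fun s => |β' s - β s|)) ^ 2 := by
  obtain ⟨ha0, ha2⟩ := ha
  set P := ∏ s ∈ Icc 1 t, (1 - β s)
  set P' := ∏ s ∈ Icc 1 t, (1 - β' s)
  set Δ := (Icc 1 T).sup' hne fun s => |β' s - β s|
  have hsub : Icc 1 t ⊆ Icc 1 T := Icc_subset_Icc le_rfl (mem_Icc.1 ht).2
  have hunit {γ : ℕ → ℝ} (hγ : ∀ s ∈ Icc 1 T, γ s ∈ Set.Icc βmin βmax) :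
      ∀ s ∈ Icc 1 t, γ s ∈ Set.Icc 0 1 := fun s hs =>
    ⟨by linarith [(hγ s (hsub hs)).1], by linarith [(hγ s (hsub hs)).2]⟩
  have hΔ : 0 ≤ Δ := (abs_nonneg _).trans (le_sup' (fun s => |β' s - β s|) hne.choose_spec)
  have hdrift : |P' - P| ≤ t / (1 - βmax) * Δ :=
    calc |P' - P| ≤ t * Δ := by
          simpa using abs_prod_one_sub_sub_prod_one_sub_le (Icc 1 t) (hunit hβ) (hunit hβ')
            fun s hs => le_sup' (fun s => |β' s - β s|) (hsub hs)
      _ ≤ t / (1 - βmax) * Δ := by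
          gcongr
          exact le_div_self t.cast_nonneg (by linarith) (by linarith)
  have hconst : (D : ℝ) / (4 * a ^ 2) ≤ D * (1 - a) ^ 2 / (4 * a ^ 4) :=
    calc (D : ℝ) / (4 * a ^ 2) = D * a ^ 2 / (4 * a ^ 4) := by field_simp
      _ ≤ D * (1 - a) ^ 2 / (4 * a ^ 4) := by gcongr; linarith
  calc _ ≤ |P' - P| ^ 2 * (D / (4 * a ^ 2) + ‖x₀‖ ^ 2 / (8 * a ^ 2)) := by
        rw [sq_abs]
        exact klIso_sqrt_smul_le x₀ ha0 hᾱ hᾱ'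
    _ ≤ (t / (1 - βmax) * Δ) ^ 2 * (D * (1 - a) ^ 2 / (4 * a ^ 4) + ‖x₀‖ ^ 2 / (8 * a ^ 2)) := by
        gcongr
    _ = _ := by ring
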